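/- arXiv:2002.07867 — 4 statements merged into one kernel-verified Lean document; each statement's English description precedes it below -/
import Mathlib

section
/- Let σ: ℝ → ℝ be 1-Lipschitz with |σ(x)| ≤ |x| for all x. Given two parameter sets θ_a = (W_l^a) and θ_b = (W_l^b) with spectral norm bounds λ̄_l ≥ max(‖W_l^a‖_2, ‖W_l^b‖_2), the layer outputs satisfy ‖F_l^a − F_l^b‖_F ≤ ‖X‖_F · (∏_{p=1}^{l} λ̄_p) · Σ_{p=1}^{l} λ̄_p^{-1} ‖W_p^a − W_p^b‖_2 for every l ∈ [L]. -/
/-!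
Write `Fᵃ_{l+1} - Fᵇ_{l+1} = ψ(Fᵃ_l Wᵃ_l) - ψ(Fᵇ_l Wᵇ_l)` and split
`Fᵃ_l Wᵃ_l - Fᵇ_l Wᵇ_l = (Fᵃ_l - Fᵇ_l) Wᵃ_l + Fᵇ_l (Wᵃ_l - Wᵇ_l)`. Since `‖M W‖_F ≤ ‖M‖_F ‖W‖_2` and
the activation is 1-Lipschitz, the error `d_l = ‖Fᵃ_l - Fᵇ_l‖_F` obeys
`d_{l+1} ≤ λ̄_l d_l + ‖Fᵇ_l‖_F ‖Wᵃ_l - Wᵇ_l‖_2`, while `|σ x| ≤ |x|` gives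
`‖Fᵇ_l‖_F ≤ ‖X‖_F ∏_{p<l} λ̄_p`. Unrolling this linear recursion gives the bound.
-/

open Matrix BigOperators Finset MeasureTheory ProbabilityTheory Filter
open scoped NNReal

/-- Frobenius norm of a real matrix. -/
noncomputable def frob {m n : Type*} [Fintype m] [Fintype n] (M : Matrix m n ℝ) : ℝ :=
  Real.sqrt (∑ i, ∑ j, (M i j) ^ 2)

/-- Spectral norm (largest singular value) of a real matrix. -/
noncomputable def spec {m n : Type*} [Fintype m] [Fintype n] [DecidableEq n]
    (M : Matrix m n ℝ) : ℝ :=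
  ‖LinearMap.toContinuousLinearMap (Matrix.toEuclideanLin M)‖

section Frobenius

attribute [local instance] Matrix.frobeniusSeminormedAddCommGroup

lemma frob_eq_frobenius_norm {m n : Type*} [Fintype m] [Fintype n] (M : Matrix m n ℝ) :
    frob M = ‖M‖ := by
  simp [frob, Matrix.frobenius_norm_def, Real.sqrt_eq_rpow]

lemma frob_add_le {m n : Type*} [Fintype m] [Fintype n] (A B : Matrix m n ℝ) :
    frob (A + B) ≤ frob A + frob B := by
  simpa only [frob_eq_frobenius_norm] using norm_add_le A B

end Frobenius

section MatrixNorms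

variable {l m n : Type*} [Fintype l] [Fintype m] [Fintype n]

lemma spec_nonneg [DecidableEq n] (M : Matrix m n ℝ) : 0 ≤ spec M := norm_nonneg _

lemma spec_sub_le [DecidableEq n] (A B : Matrix m n ℝ) : spec (A - B) ≤ spec A + spec B := by
  simp only [spec, map_sub]
  exact norm_sub_le _ _

open scoped Matrix.Norms.L2Operator in
lemma spec_eq_l2_opNorm [DecidableEq n] (M : Matrix m n ℝ) : spec M = ‖M‖ := rfl

open scoped Matrix.Norms.L2Operator in
lemma sum_sq_vecMul_le [DecidableEq m] [DecidableEq n] (v : m → ℝ) (W : Matrix m n ℝ) :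
    ∑ j, (v ᵥ* W) j ^ 2 ≤ spec W ^ 2 * ∑ i, v i ^ 2 := by
  have h := Wᵀ.l2_opNorm_mulVec (WithLp.toLp 2 v)
  rw [← conjTranspose_eq_transpose_of_trivial, l2_opNorm_conjTranspose,
    conjTranspose_eq_transpose_of_trivial, mulVec_transpose] at h
  simpa [spec_eq_l2_opNorm, mul_pow, EuclideanSpace.real_norm_sq_eq]
    using pow_le_pow_left₀ (norm_nonneg _) h 2

lemma frob_nonneg (M : Matrix m n ℝ) : 0 ≤ frob M := Real.sqrt_nonneg _

lemma frob_le_frob_of_abs_le {A B : Matrix m n ℝ} (h : ∀ i j, |A i j| ≤ |B i j|) :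
    frob A ≤ frob B :=
  Real.sqrt_le_sqrt <| sum_le_sum fun i _ => sum_le_sum fun j _ => sq_le_sq.mpr (h i j)

lemma frob_mul_le [DecidableEq m] [DecidableEq n] (M : Matrix l m ℝ) (W : Matrix m n ℝ) :
    frob (M * W) ≤ frob M * spec W := by
  have hrows : ∑ i, ∑ j, (M * W) i j ^ 2 ≤ spec W ^ 2 * ∑ i, ∑ k, M i k ^ 2 := by
    rw [mul_sum]
    exact sum_le_sum fun i _ => sum_sq_vecMul_le (M i) W
  calc frob (M * W) ≤ Real.sqrt (spec W ^ 2 * ∑ i, ∑ k, M i k ^ 2) := Real.sqrt_le_sqrt hrows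
    _ = frob M * spec W := by
      rw [Real.sqrt_mul (sq_nonneg _), Real.sqrt_sq (spec_nonneg W), mul_comm, frob]

lemma frob_map_le {f : ℝ → ℝ} (hf : ∀ x, |f x| ≤ |x|) (A : Matrix m n ℝ) :
    frob (A.map f) ≤ frob A :=
  frob_le_frob_of_abs_le fun i j => hf (A i j)

lemma frob_map_sub_map_le {f : ℝ → ℝ} (hf : LipschitzWith 1 f) (A B : Matrix m n ℝ) :
    frob (A.map f - B.map f) ≤ frob (A - B) :=
  frob_le_frob_of_abs_le fun i j => by
    simpa [Real.dist_eq] using hf.dist_le_mul (A i j) (B i j)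

end MatrixNorms

section Layers

variable {k m n : Type*} [Fintype k] [Fintype m] [Fintype n] [DecidableEq m] [DecidableEq n]
  {f : ℝ → ℝ}

lemma frob_map_mul_le (hf : ∀ x, |f x| ≤ |x|) (F : Matrix k m ℝ) (W : Matrix m n ℝ) :
    frob ((F * W).map f) ≤ frob F * spec W :=
  (frob_map_le hf _).trans (frob_mul_le F W)

lemma frob_map_mul_sub_map_mul_le (hf : LipschitzWith 1 f) (F F' : Matrix k m ℝ)
    (W W' : Matrix m n ℝ) :
    frob ((F * W).map f - (F' * W').map f) ≤ frob (F - F') * spec W + frob F' * spec (W - W') :=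
  calc frob ((F * W).map f - (F' * W').map f)
      ≤ frob ((F - F') * W + F' * (W - W')) := by
        refine (frob_map_sub_map_le hf _ _).trans_eq ?_
        rw [Matrix.sub_mul, Matrix.mul_sub, sub_add_sub_cancel]
    _ ≤ frob (F - F') * spec W + frob F' * spec (W - W') :=
        (frob_add_le _ _).trans (add_le_add (frob_mul_le _ _) (frob_mul_le _ _))

end Layers

lemma le_mul_prod_range_of_le_mul {K : ℕ} {b lam : ℕ → ℝ} {c : ℝ} (hb0 : b 0 ≤ c)
    (hlam : ∀ p, 0 ≤ lam p) (hstep : ∀ l < K, b (l + 1) ≤ b l * lam l) :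
    ∀ l ≤ K, b l ≤ c * ∏ p ∈ range l, lam p := by
  intro l hl
  induction l with
  | zero => simpa using hb0
  | succ l ih =>
    calc b (l + 1) ≤ b l * lam l := hstep l hl
      _ ≤ (c * ∏ p ∈ range l, lam p) * lam l :=
        mul_le_mul_of_nonneg_right (ih (by omega)) (hlam l)
      _ = c * ∏ p ∈ range (l + 1), lam p := by rw [prod_range_succ, mul_assoc]

-- Since `(lam p)⁻¹ = 0` when `lam p = 0`, the bound needs `ε p = 0` there.
lemma le_mul_prod_range_mul_sum_of_le {K : ℕ} {d lam ε : ℕ → ℝ} {c : ℝ} (hd0 : d 0 ≤ 0)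
    (hlam : ∀ p, 0 ≤ lam p) (hε : ∀ p, lam p = 0 → ε p = 0)
    (hstep : ∀ l < K, d (l + 1) ≤ d l * lam l + c * (∏ p ∈ range l, lam p) * ε l) :
    ∀ l ≤ K, d l ≤ c * (∏ p ∈ range l, lam p) * ∑ p ∈ range l, (lam p)⁻¹ * ε p := by
  intro l hl
  induction l with
  | zero => simpa using hd0
  | succ l ih =>
    have hcancel : lam l * (lam l)⁻¹ * ε l = ε l := by
      rcases eq_or_ne (lam l) 0 with h | h
      · simp [hε l h]
      · rw [mul_inv_cancel₀ h, one_mul]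
    set P := ∏ p ∈ range l, lam p
    set S := ∑ p ∈ range l, (lam p)⁻¹ * ε p
    calc d (l + 1) ≤ d l * lam l + c * P * ε l := hstep l hl
      _ ≤ c * P * S * lam l + c * P * ε l :=
        add_le_add_left (mul_le_mul_of_nonneg_right (ih (by omega)) (hlam l)) _
      _ = c * (P * lam l) * (S + (lam l)⁻¹ * ε l) := by linear_combination (c * P) * hcancel.symm
      _ = _ := by rw [prod_range_succ, sum_range_succ]

-- The activation after layer `l + 1`: `σ` on hidden layers, the identity on the output layer `L`.
def activation (σ : ℝ → ℝ) (L l : ℕ) : ℝ → ℝ := if l + 1 < L then σ else id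

lemma lipschitzWith_activation {σ : ℝ → ℝ} (hσ : LipschitzWith 1 σ) (L l : ℕ) :
    LipschitzWith 1 (activation σ L l) := by
  unfold activation; split_ifs
  exacts [hσ, LipschitzWith.id]

lemma abs_activation_le {σ : ℝ → ℝ} (hσ : ∀ x, |σ x| ≤ |x|) (L l : ℕ) (x : ℝ) :
    |activation σ L l x| ≤ |x| := by
  unfold activation; split_ifs
  exacts [hσ x, le_rfl]

lemma eq_map_activation {N L : ℕ} {n : ℕ → ℕ} {σ : ℝ → ℝ}
    {W : (l : ℕ) → Matrix (Fin (n l)) (Fin (n (l + 1))) ℝ}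
    {F : (l : ℕ) → Matrix (Fin N) (Fin (n l)) ℝ}
    (hmid : ∀ l : ℕ, l + 1 ≤ L - 1 → F (l + 1) = (F l * W l).map σ)
    (hlast : ∀ l : ℕ, l + 1 = L → F (l + 1) = F l * W l) {l : ℕ} (hl : l < L) :
    F (l + 1) = (F l * W l).map (activation σ L l) := by
  unfold activation; split_ifs with h
  · exact hmid l (by omega)
  · rw [hlast l (by omega), Matrix.map_id]

theorem stmt1_general {N L : ℕ} (n : ℕ → ℕ) (σ : ℝ → ℝ)
    (hσ1 : LipschitzWith 1 σ) (hσ2 : ∀ x : ℝ, |σ x| ≤ |x|)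
    (X : Matrix (Fin N) (Fin (n 0)) ℝ)
    (Wa Wb : (l : ℕ) → Matrix (Fin (n l)) (Fin (n (l + 1))) ℝ)
    (Fa Fb : (l : ℕ) → Matrix (Fin N) (Fin (n l)) ℝ)
    (lam : ℕ → ℝ)
    (hlam : ∀ l : ℕ, max (spec (Wa l)) (spec (Wb l)) ≤ lam l)
    (hFa0 : Fa 0 = X) (hFb0 : Fb 0 = X)
    (hamid : ∀ l : ℕ, l + 1 ≤ L - 1 → Fa (l + 1) = (Fa l * Wa l).map σ)
    (hbmid : ∀ l : ℕ, l + 1 ≤ L - 1 → Fb (l + 1) = (Fb l * Wb l).map σ)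
    (halast : ∀ l : ℕ, l + 1 = L → Fa (l + 1) = Fa l * Wa l)
    (hblast : ∀ l : ℕ, l + 1 = L → Fb (l + 1) = Fb l * Wb l) :
    ∀ l : ℕ, 1 ≤ l → l ≤ L →
      frob (Fa l - Fb l) ≤
        frob X * (∏ p ∈ Finset.range l, lam p) *
          ∑ p ∈ Finset.range l, (lam p)⁻¹ * spec (Wa p - Wb p) := by
  have hlamA l : spec (Wa l) ≤ lam l := (le_max_left _ _).trans (hlam l)
  have hlamB l : spec (Wb l) ≤ lam l := (le_max_right _ _).trans (hlam l)
  have hlam0 l : 0 ≤ lam l := (spec_nonneg _).trans (hlamA l)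
  have hFb : ∀ l ≤ L, frob (Fb l) ≤ frob X * ∏ p ∈ range l, lam p :=
    le_mul_prod_range_of_le_mul (hFb0 ▸ le_rfl) hlam0 fun l hl => by
      rw [eq_map_activation hbmid hblast hl]
      exact (frob_map_mul_le (abs_activation_le hσ2 L l) _ _).trans
        (mul_le_mul_of_nonneg_left (hlamB l) (frob_nonneg _))
  intro l _ hl
  refine le_mul_prod_range_mul_sum_of_le (d := fun l => frob (Fa l - Fb l))
    (by simp [hFa0, hFb0, frob]) hlam0 (fun p hp => ?_)
    (fun l hl => ?_) l hl
  · exact le_antisymm (by linarith [spec_sub_le (Wa p) (Wb p), hlamA p, hlamB p])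
      (spec_nonneg _)
  · rw [eq_map_activation hamid halast hl, eq_map_activation hbmid hblast hl]
    refine (frob_map_mul_sub_map_mul_le (lipschitzWith_activation hσ1 L l) _ _ _ _).trans ?_
    gcongr
    · exact frob_nonneg _
    · exact hlamA l
    · exact spec_nonneg _
    · exact hFb l hl.le

/-- Lipschitz dependence of layer outputs on the weights. -/
theorem stmt1 {N L : ℕ} (hL : 1 ≤ L) (n : ℕ → ℕ) (σ : ℝ → ℝ)
    (hσ1 : LipschitzWith 1 σ) (hσ2 : ∀ x : ℝ, |σ x| ≤ |x|)
    (X : Matrix (Fin N) (Fin (n 0)) ℝ)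
    (Wa Wb : (l : ℕ) → Matrix (Fin (n l)) (Fin (n (l + 1))) ℝ)
    (Fa Fb : (l : ℕ) → Matrix (Fin N) (Fin (n l)) ℝ)
    (lam : ℕ → ℝ)
    (hlam : ∀ l : ℕ, max (spec (Wa l)) (spec (Wb l)) ≤ lam l)
    (hFa0 : Fa 0 = X) (hFb0 : Fb 0 = X)
    (hamid : ∀ l : ℕ, l + 1 ≤ L - 1 → Fa (l + 1) = (Fa l * Wa l).map σ)
    (hbmid : ∀ l : ℕ, l + 1 ≤ L - 1 → Fb (l + 1) = (Fb l * Wb l).map σ)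
    (halast : ∀ l : ℕ, l + 1 = L → Fa (l + 1) = Fa l * Wa l)
    (hblast : ∀ l : ℕ, l + 1 = L → Fb (l + 1) = Fb l * Wb l) :
    ∀ l : ℕ, 1 ≤ l → l ≤ L →
      frob (Fa l - Fb l) ≤
        frob X * (∏ p ∈ Finset.range l, lam p) *
          ∑ p ∈ Finset.range l, (lam p)⁻¹ * spec (Wa p - Wb p) :=
  stmt1_general n σ hσ1 hσ2 X Wa Wb Fa Fb lam hlam hFa0 hFb0 hamid hbmid halast hblast
end

section
/- Let the activation σ be defined by σ(x) = −(1−γ)²/(2πβ) + (β/(1−γ)) ∫_{−∞}^{∞} max(γu, u) e^{−πβ²(x−u)²/(1−γ)²} du for fixed γ ∈ (0,1) and β > 0. Then σ'(x) = γ + (1−γ)Ψ(β√(2π)x/(1−γ)), where Ψ is the CDF of the standard normal distribution; in particular σ'(x) ∈ [γ, 1] for all x ∈ ℝ. -/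
/-!
With `a = πβ² / (1 - γ)²` and `max (γ u) u = γ u + (1 - γ) max u 0`, the integral in `σ` has the
closed form `γ x √(π/a) + (1 - γ) (e^{-a x²} / (2a) + x ∫_{-∞}^x e^{-a t²} dt)`: substitute
`u ↦ x - u`, note that the odd moment `∫ s e^{-a s²}` vanishes and that `s e^{-a s²}` has the
primitive `-e^{-a s²} / (2a)`. Differentiating, the two `x e^{-a x²}` terms cancel, leaving
`γ √(π/a) + (1 - γ) ∫_{-∞}^x e^{-a t²} dt`, and the change of variables `t ↦ b t` with
`b² / 2 = a` identifies the remaining integral with `Ψ`.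
-/

open MeasureTheory Filter
open scoped Real

/-- The Gaussian-smoothed leaky ReLU activation of the paper. -/
noncomputable def slrelu (γ β : ℝ) (x : ℝ) : ℝ :=
  -(1 - γ) ^ 2 / (2 * Real.pi * β) +
    (β / (1 - γ)) *
      ∫ u : ℝ, max (γ * u) u * Real.exp (-(Real.pi * β ^ 2 * (x - u) ^ 2) / (1 - γ) ^ 2)

/-- The CDF of the standard normal distribution. -/
noncomputable def stdNormalCDF (z : ℝ) : ℝ :=
  ∫ t in Set.Iic z, Real.exp (-t ^ 2 / 2) / Real.sqrt (2 * Real.pi)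

open Real Set

theorem integral_comp_mul_left_Iic {E : Type*} [NormedAddCommGroup E] [NormedSpace ℝ E]
    (g : ℝ → E) (a : ℝ) {b : ℝ} (hb : 0 < b) :
    ∫ x in Iic a, g (b * x) = b⁻¹ • ∫ x in Iic (b * a), g x := by
  rw [← integral_indicator measurableSet_Iic, ← integral_indicator measurableSet_Iic,
    ← abs_of_pos (inv_pos.mpr hb), ← Measure.integral_comp_mul_left]
  congr
  ext1 x
  rw [← indicator_comp_right, preimage_const_mul_Iic₀ _ hb, mul_div_cancel_left₀ _ hb.ne',
    Function.comp_def]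

theorem hasDerivAt_integral_Iic {E : Type*} [NormedAddCommGroup E] [NormedSpace ℝ E]
    [CompleteSpace E] {f : ℝ → E} (hf : Continuous f) (hfi : Integrable f) (x : ℝ) :
    HasDerivAt (fun y => ∫ t in Iic y, f t) (f x) x := by
  have hsplit : (fun y => ∫ t in Iic y, f t) =
      fun y => (∫ t in Iic 0, f t) + ∫ t in (0 : ℝ)..y, f t := by
    funext y
    rw [← intervalIntegral.integral_Iic_sub_Iic hfi.integrableOn hfi.integrableOn,
      add_sub_cancel]
  rw [hsplit]
  exact ((hf.integral_hasStrictDerivAt 0 x).hasDerivAt).const_add _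

theorem max_mul_self_eq_add_mul_max_zero {γ : ℝ} (hγ : γ ≤ 1) (v : ℝ) :
    max (γ * v) v = γ * v + (1 - γ) * max v 0 := by
  rcases le_total v 0 with hv | hv
  · rw [max_eq_left (by nlinarith), max_eq_right hv]
    ring
  · rw [max_eq_right (by nlinarith), max_eq_left hv]
    ring

theorem hasDerivAt_exp_neg_mul_sq (a x : ℝ) :
    HasDerivAt (fun s => exp (-a * s ^ 2)) (-2 * a * x * exp (-a * x ^ 2)) x := by
  refine ((hasDerivAt_pow 2 x).const_mul (-a)).exp.congr_deriv ?_
  push_cast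
  ring

theorem integral_mul_exp_neg_mul_sq_eq_zero (a : ℝ) :
    ∫ s, s * exp (-a * s ^ 2) = 0 := by
  have h := integral_neg_eq_self (fun s => s * exp (-a * s ^ 2)) volume
  simp only [neg_mul, neg_sq, integral_neg] at h ⊢
  linarith

section Gaussian

variable {a : ℝ}

theorem integral_Iic_mul_exp_neg_mul_sq (ha : 0 < a) (c : ℝ) :
    ∫ s in Iic c, s * exp (-a * s ^ 2) = -exp (-a * c ^ 2) / (2 * a) := by
  have hlim : Tendsto (fun s => -exp (-a * s ^ 2) / (2 * a)) atBot (nhds 0) := by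
    have hsq : Tendsto (fun s : ℝ => s ^ 2) atBot atTop := by
      simpa [Function.comp_def] using
        (tendsto_pow_atTop (α := ℝ) two_ne_zero).comp tendsto_neg_atBot_atTop
    have h := tendsto_exp_atBot.comp (hsq.const_mul_atTop_of_neg (neg_lt_zero.2 ha))
    simpa [Function.comp_def, neg_div] using h.neg.div_const (2 * a)
  rw [integral_Iic_of_hasDerivAt_of_tendsto' (fun s _ => ?_)
    (integrable_mul_exp_neg_mul_sq ha).integrableOn hlim, sub_zero]
  refine ((hasDerivAt_exp_neg_mul_sq a s).neg.div_const (2 * a)).congr_deriv ?_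
  field_simp

theorem integrable_mul_exp_neg_mul_sub_sq (ha : 0 < a) (x : ℝ) :
    Integrable fun u => u * exp (-a * (x - u) ^ 2) := by
  have h := (((integrable_exp_neg_mul_sq ha).const_mul x).sub
    (integrable_mul_exp_neg_mul_sq ha)).comp_sub_left x
  refine h.congr (Eventually.of_forall fun u => ?_)
  simp only [Pi.sub_apply]
  ring

theorem integral_mul_exp_neg_mul_sub_sq (ha : 0 < a) (x : ℝ) :
    ∫ u, u * exp (-a * (x - u) ^ 2) = x * √(π / a) := by
  rw [← integral_sub_left_eq_self _ volume x]
  simp only [sub_sub_cancel, sub_mul]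
  rw [integral_sub ((integrable_exp_neg_mul_sq ha).const_mul x)
    (integrable_mul_exp_neg_mul_sq ha), integral_const_mul, integral_gaussian,
    integral_mul_exp_neg_mul_sq_eq_zero, sub_zero]

theorem integral_max_zero_mul_exp_neg_mul_sub_sq (ha : 0 < a) (x : ℝ) :
    ∫ u, max u 0 * exp (-a * (x - u) ^ 2) =
      exp (-a * x ^ 2) / (2 * a) + x * ∫ t in Iic x, exp (-a * t ^ 2) := by
  have hind : (fun s => max (x - s) 0 * exp (-a * s ^ 2)) =
      (Iic x).indicator fun s => x * exp (-a * s ^ 2) - s * exp (-a * s ^ 2) := by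
    funext s
    by_cases hs : s ≤ x
    · rw [indicator_of_mem (mem_Iic.2 hs), max_eq_left (sub_nonneg.2 hs)]
      ring
    · rw [indicator_of_notMem (mt mem_Iic.1 hs), max_eq_right (by linarith [not_le.1 hs]),
        zero_mul]
  rw [← integral_sub_left_eq_self _ volume x]
  simp only [sub_sub_cancel]
  rw [hind, integral_indicator measurableSet_Iic,
    integral_sub ((integrable_exp_neg_mul_sq ha).const_mul x).integrableOn
      (integrable_mul_exp_neg_mul_sq ha).integrableOn,
    integral_const_mul, integral_Iic_mul_exp_neg_mul_sq ha]
  ring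

theorem integrable_max_zero_mul_exp_neg_mul_sub_sq (ha : 0 < a) (x : ℝ) :
    Integrable fun u => max u 0 * exp (-a * (x - u) ^ 2) := by
  refine (integrable_mul_exp_neg_mul_sub_sq ha x).mono (by fun_prop)
    (Eventually.of_forall fun u => ?_)
  simp only [norm_mul]
  gcongr
  simp only [Real.norm_eq_abs]
  exact abs_max_le_max_abs_abs.trans (by simp)

theorem hasDerivAt_integral_max_zero_mul_exp_neg_mul_sub_sq (ha : 0 < a) (x : ℝ) :
    HasDerivAt (fun y => ∫ u, max u 0 * exp (-a * (y - u) ^ 2))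
      (∫ t in Iic x, exp (-a * t ^ 2)) x := by
  simp only [integral_max_zero_mul_exp_neg_mul_sub_sq ha]
  have h := ((hasDerivAt_exp_neg_mul_sq a x).div_const (2 * a)).add ((hasDerivAt_id x).mul
    (hasDerivAt_integral_Iic (by fun_prop) (integrable_exp_neg_mul_sq ha) x))
  refine h.congr_deriv ?_
  simp only [id]
  field_simp
  ring

theorem hasDerivAt_integral_max_mul_self_mul_exp_neg_mul_sub_sq {γ : ℝ} (hγ : γ ≤ 1)
    (ha : 0 < a) (x : ℝ) :
    HasDerivAt (fun y => ∫ u, max (γ * u) u * exp (-a * (y - u) ^ 2))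
      (γ * √(π / a) + (1 - γ) * ∫ t in Iic x, exp (-a * t ^ 2)) x := by
  have hsplit : (fun y => ∫ u, max (γ * u) u * exp (-a * (y - u) ^ 2)) = fun y =>
      γ * y * √(π / a) + (1 - γ) * ∫ u, max u 0 * exp (-a * (y - u) ^ 2) := by
    funext y
    simp only [max_mul_self_eq_add_mul_max_zero hγ, add_mul, mul_assoc]
    rw [integral_add ((integrable_mul_exp_neg_mul_sub_sq ha y).const_mul γ)
      ((integrable_max_zero_mul_exp_neg_mul_sub_sq ha y).const_mul (1 - γ)),
      integral_const_mul, integral_const_mul, integral_mul_exp_neg_mul_sub_sq ha]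
  rw [hsplit]
  have hlin := ((hasDerivAt_id x).const_mul γ).mul_const √(π / a)
  have hrelu := (hasDerivAt_integral_max_zero_mul_exp_neg_mul_sub_sq ha x).const_mul (1 - γ)
  exact (hlin.add hrelu).congr_deriv (by ring)

end Gaussian

theorem stdNormalCDF_mul {b : ℝ} (hb : 0 < b) (x : ℝ) :
    stdNormalCDF (b * x) = b / √(2 * π) * ∫ t in Iic x, exp (-(b ^ 2 / 2) * t ^ 2) := by
  have h := integral_comp_mul_left_Iic (fun t => exp (-t ^ 2 / 2) / √(2 * π)) x hb
  rw [smul_eq_mul, eq_inv_mul_iff_mul_eq₀ hb.ne'] at h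
  rw [stdNormalCDF, ← h, integral_div]
  field_simp

theorem stdNormalCDF_nonneg (z : ℝ) : 0 ≤ stdNormalCDF z :=
  setIntegral_nonneg measurableSet_Iic fun t _ => by positivity

theorem stdNormalCDF_le_one (z : ℝ) : stdNormalCDF z ≤ 1 := by
  have hpdf :
      (fun t => exp (-t ^ 2 / 2) / √(2 * π)) = ProbabilityTheory.gaussianPDFReal 0 1 := by
    ext t
    simp [ProbabilityTheory.gaussianPDFReal, div_eq_inv_mul]
  rw [stdNormalCDF, hpdf, ← ProbabilityTheory.integral_gaussianPDFReal_eq_one 0 one_ne_zero]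
  exact setIntegral_le_integral (ProbabilityTheory.integrable_gaussianPDFReal 0 1)
    (Eventually.of_forall (ProbabilityTheory.gaussianPDFReal_nonneg 0 1))

theorem hasDerivAt_slrelu {γ β : ℝ} (hγ : γ < 1) (hβ : 0 < β) (x : ℝ) :
    HasDerivAt (slrelu γ β)
      (γ + (1 - γ) * stdNormalCDF (β * √(2 * π) * x / (1 - γ))) x := by
  have hc : 0 < 1 - γ := sub_pos.2 hγ
  set b := β * √(2 * π) / (1 - γ) with hb_def
  have hb : 0 < b := by positivity
  have hb_sq : b ^ 2 / 2 = π * β ^ 2 / (1 - γ) ^ 2 := by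
    rw [hb_def, div_pow, mul_pow, sq_sqrt (by positivity)]
    ring
  have hσ : slrelu γ β = fun y => -(1 - γ) ^ 2 / (2 * π * β) +
      β / (1 - γ) * ∫ u, max (γ * u) u * exp (-(b ^ 2 / 2) * (y - u) ^ 2) := by
    ext y
    simp only [slrelu, hb_sq]
    congr 3 with u
    ring_nf
  have hsqrt : √(π / (b ^ 2 / 2)) = (1 - γ) / β := by
    rw [hb_sq, show π / (π * β ^ 2 / (1 - γ) ^ 2) = ((1 - γ) / β) ^ 2 by field_simp,
      sqrt_sq (by positivity)]
  rw [show β * √(2 * π) * x / (1 - γ) = b * x by ring, stdNormalCDF_mul hb, hσ]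
  refine (((hasDerivAt_integral_max_mul_self_mul_exp_neg_mul_sub_sq hγ.le
    (by positivity) x).const_mul (β / (1 - γ))).const_add _).congr_deriv ?_
  rw [hsqrt, hb_def]
  field_simp

/-- `σ'(x) = γ + (1−γ)Ψ(β√(2π)x/(1−γ))`, and `σ'(x) ∈ [γ, 1]`. -/
theorem stmt6 (γ β : ℝ) (hγ : γ ∈ Set.Ioo (0 : ℝ) 1) (hβ : 0 < β) (x : ℝ) :
    HasDerivAt (slrelu γ β)
      (γ + (1 - γ) * stdNormalCDF (β * Real.sqrt (2 * Real.pi) * x / (1 - γ))) x ∧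
    γ ≤ γ + (1 - γ) * stdNormalCDF (β * Real.sqrt (2 * Real.pi) * x / (1 - γ)) ∧
    γ + (1 - γ) * stdNormalCDF (β * Real.sqrt (2 * Real.pi) * x / (1 - γ)) ≤ 1 := by
  obtain ⟨-, hγ1⟩ := hγ
  have hc : 0 ≤ 1 - γ := sub_nonneg.2 hγ1.le
  have hΨ0 := stdNormalCDF_nonneg (β * √(2 * π) * x / (1 - γ))
  have hΨ1 := stdNormalCDF_le_one (β * √(2 * π) * x / (1 - γ))
  exact ⟨hasDerivAt_slrelu hγ1 hβ x, le_add_of_nonneg_right (mul_nonneg hc hΨ0),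
    by nlinarith⟩
end

section
/- Let σ be the smoothed leaky ReLU σ(x) = −(1−γ)²/(2πβ) + (β/(1−γ)) ∫ max(γu,u) e^{−πβ²(x−u)²/(1−γ)²} du with γ ∈ (0,1), β > 0. Then σ(0) = 0 and |σ(x)| ≤ |x| for every x ∈ ℝ. -/
open MeasureTheory Filter
open scoped Real

/-! Write `σ(x) = c + k ∫ m(u) G(x - u) du` with `m(u) = max (γu) u` the leaky ReLU and
`G(t) = exp(-b t²)` a Gaussian of total mass `√(π/b) = 1/k`. The Gaussian mean of `m` is
`(1 - γ)/(2b)`, which is exactly what the constant `c` cancels, so `σ(0) = 0`. Convolving the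
1-Lipschitz `m` with a nonnegative kernel of mass `1/k` gives a `1/k`-Lipschitz function, so `σ`
is 1-Lipschitz and `|σ(x)| = |σ(x) - σ(0)| ≤ |x|`. -/

open Real Set
open scoped NNReal

theorem lipschitzWith_max_mul_self {γ : ℝ} (hγ : |γ| ≤ 1) :
    LipschitzWith 1 fun u : ℝ => max (γ * u) u :=
  ((lipschitzWith_smul γ).max LipschitzWith.id).weaken <|
    max_le (by rwa [← NNReal.coe_le_coe, coe_nnnorm, Real.norm_eq_abs, NNReal.coe_one]) le_rfl

section ConvolutionLipschitz

variable {f g : ℝ → ℝ} {K : ℝ≥0}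

theorem LipschitzWith.integrable_comp_sub_mul (hf : LipschitzWith K f) (hg : Integrable g)
    (hg' : Integrable fun v => v * g v) (x : ℝ) : Integrable fun v => f (x - v) * g v := by
  refine Integrable.mono' ((hg.abs.const_mul |f x|).add (hg'.abs.const_mul K))
    ((hf.continuous.comp (continuous_sub_left x)).aestronglyMeasurable.mul
      hg.aestronglyMeasurable) (Eventually.of_forall fun v => ?_)
  have hfv : |f (x - v)| ≤ |f x| + K * |v| := by
    have := hf.dist_le_mul (x - v) x
    rw [Real.dist_eq, Real.dist_eq, sub_sub_cancel_left, abs_neg] at this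
    linarith [abs_sub_abs_le_abs_sub (f (x - v)) (f x)]
  calc ‖f (x - v) * g v‖ = |f (x - v)| * |g v| := by rw [Real.norm_eq_abs, abs_mul]
    _ ≤ (|f x| + K * |v|) * |g v| := by gcongr
    _ = |f x| * |g v| + K * |v * g v| := by rw [abs_mul]; ring

theorem LipschitzWith.abs_integral_mul_comp_sub_sub_le (hf : LipschitzWith K f)
    (hg : Integrable g) (hg' : Integrable fun v => v * g v) (x y : ℝ) :
    |(∫ u, f u * g (x - u)) - ∫ u, f u * g (y - u)| ≤ K * |x - y| * ∫ v, |g v| := by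
  have hsub (z : ℝ) : ∫ u, f u * g (z - u) = ∫ v, f (z - v) * g v := by
    simpa only [sub_sub_cancel] using
      (integral_sub_left_eq_self (fun u => f u * g (z - u)) volume z).symm
  rw [hsub x, hsub y, ← integral_sub (hf.integrable_comp_sub_mul hg hg' x)
    (hf.integrable_comp_sub_mul hg hg' y), ← integral_const_mul]
  refine (abs_integral_le_integral_abs).trans
    (integral_mono ((hf.integrable_comp_sub_mul hg hg' x).sub
      (hf.integrable_comp_sub_mul hg hg' y)).abs (hg.abs.const_mul _) fun v => ?_)
  have := hf.dist_le_mul (x - v) (y - v)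
  rw [Real.dist_eq, Real.dist_eq, sub_sub_sub_cancel_right] at this
  rw [← sub_mul, abs_mul]
  exact mul_le_mul_of_nonneg_right this (abs_nonneg _)

end ConvolutionLipschitz

theorem integral_mul_exp_neg_mul_sq (b : ℝ) : ∫ u, u * exp (-b * u ^ 2) = 0 := by
  have h := integral_neg_eq_self (fun u : ℝ => u * exp (-b * u ^ 2)) volume
  simp only [neg_sq, neg_mul, integral_neg] at h ⊢
  linarith

theorem integral_Ioi_mul_exp_neg_mul_sq {b : ℝ} (hb : 0 < b) :
    ∫ u in Ioi 0, u * exp (-b * u ^ 2) = (2 * b)⁻¹ := by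
  have h := integral_mul_cexp_neg_mul_sq (b := (b : ℂ)) (by simpa using hb)
  apply Complex.ofReal_injective
  rw [← integral_complex_ofReal]
  push_cast
  exact h

theorem integral_max_mul_self_mul_exp_neg_mul_sq {γ b : ℝ} (hγ : γ ≤ 1) (hb : 0 < b) :
    ∫ u, max (γ * u) u * exp (-b * u ^ 2) = (1 - γ) / (2 * b) := by
  have hsplit (u : ℝ) : max (γ * u) u * exp (-b * u ^ 2) = γ * (u * exp (-b * u ^ 2)) +
      (1 - γ) * (Ioi 0).indicator (fun w => w * exp (-b * w ^ 2)) u := by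
    rcases le_or_gt u 0 with hu | hu
    · rw [max_eq_left (by nlinarith), indicator_of_notMem (show u ∉ Ioi 0 from not_lt.2 hu)]
      ring
    · rw [max_eq_right (by nlinarith), indicator_of_mem (show u ∈ Ioi 0 from hu)]
      ring
  have hint := integrable_mul_exp_neg_mul_sq hb
  simp only [hsplit]
  rw [integral_add (hint.const_mul γ) ((hint.indicator measurableSet_Ioi).const_mul (1 - γ)),
    integral_const_mul, integral_const_mul, integral_mul_exp_neg_mul_sq,
    integral_indicator measurableSet_Ioi, integral_Ioi_mul_exp_neg_mul_sq hb]
  ring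

noncomputable def leakyReLUConvGaussian (γ b x : ℝ) : ℝ :=
  ∫ u, max (γ * u) u * exp (-b * (x - u) ^ 2)

theorem leakyReLUConvGaussian_zero {γ b : ℝ} (hγ : γ ≤ 1) (hb : 0 < b) :
    leakyReLUConvGaussian γ b 0 = (1 - γ) / (2 * b) := by
  simpa only [leakyReLUConvGaussian, zero_sub, neg_sq] using
    integral_max_mul_self_mul_exp_neg_mul_sq hγ hb

theorem abs_leakyReLUConvGaussian_sub_le {γ b : ℝ} (hγ : |γ| ≤ 1) (hb : 0 < b) (x y : ℝ) :
    |leakyReLUConvGaussian γ b x - leakyReLUConvGaussian γ b y| ≤ √(π / b) * |x - y| := by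
  have h := (lipschitzWith_max_mul_self hγ).abs_integral_mul_comp_sub_sub_le
    (integrable_exp_neg_mul_sq hb) (integrable_mul_exp_neg_mul_sq hb) x y
  rw [NNReal.coe_one, one_mul] at h
  calc _ ≤ |x - y| * ∫ v, |exp (-b * v ^ 2)| := h
    _ = √(π / b) * |x - y| := by rw [mul_comm]; simp only [abs_exp, integral_gaussian]

theorem slrelu_eq (γ β x : ℝ) :
    slrelu γ β x = -(1 - γ) ^ 2 / (2 * π * β) +
      β / (1 - γ) * leakyReLUConvGaussian γ (π * β ^ 2 / (1 - γ) ^ 2) x := by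
  simp only [slrelu, leakyReLUConvGaussian, neg_div, neg_mul, div_mul_eq_mul_div]

/-- `σ(0) = 0` and `|σ(x)| ≤ |x|` for the smoothed leaky ReLU. -/
theorem stmt7 (γ β : ℝ) (hγ : γ ∈ Set.Ioo (0 : ℝ) 1) (hβ : 0 < β) :
    slrelu γ β 0 = 0 ∧ ∀ x : ℝ, |slrelu γ β x| ≤ |x| := by
  obtain ⟨hγ0, hγ1⟩ := hγ
  have h1γ : 0 < 1 - γ := by linarith
  set b := π * β ^ 2 / (1 - γ) ^ 2 with hb_def
  have hb : 0 < b := by positivity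
  have hzero : slrelu γ β 0 = 0 := by
    rw [slrelu_eq, leakyReLUConvGaussian_zero hγ1.le hb, hb_def]
    field_simp
    ring
  have hmass : √(π / b) = (1 - γ) / β := by
    rw [hb_def, show π / (π * β ^ 2 / (1 - γ) ^ 2) = ((1 - γ) / β) ^ 2 by field_simp]
    exact sqrt_sq (by positivity)
  refine ⟨hzero, fun x => ?_⟩
  calc |slrelu γ β x| = |slrelu γ β x - slrelu γ β 0| := by rw [hzero, sub_zero]
    _ = β / (1 - γ) * |leakyReLUConvGaussian γ b x - leakyReLUConvGaussian γ b 0| := by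
      rw [slrelu_eq, slrelu_eq, ← hb_def, add_sub_add_left_eq_sub, ← mul_sub, abs_mul,
        abs_of_pos (by positivity)]
    _ ≤ β / (1 - γ) * (√(π / b) * |x - 0|) := by
      gcongr
      exact abs_leakyReLUConvGaussian_sub_le (abs_le.2 ⟨by linarith, hγ1.le⟩) hb x 0
    _ = |x| := by rw [hmass, sub_zero]; field_simp
end

section
/- Let Ψ be the CDF of the standard normal distribution. For any γ ∈ (0,1) and β > 0, the function σ(x) = −(1−γ)²/(2πβ) + ((1−γ)²/(2πβ)) exp(−πβ²x²/(1−γ)²) + x Ψ(β√(2π)x/(1−γ)) + γx Ψ(−β√(2π)x/(1−γ)) equals the Gaussian-smoothed leaky ReLU, i.e., −(1−γ)²/(2πβ) + (β/(1−γ)) ∫_{−∞}^{∞} max(γu, u) e^{−πβ²(x−u)²/(1−γ)²} du. -/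
/-!
After the shift `u = x + t` the integral becomes `∫ max (γ (t + x)) (t + x) e^{-(c t)²/2} dt` with
`c = β √(2π) / (1 - γ)`, and the leaky ReLU is linear on each side of `t = -x`. On each half-line the
integrand is `(t + x)` times a Gaussian: the `t`-part has the elementary antiderivative
`-e^{-(c t)²/2} / c²`, and the constant part is a rescaled normal CDF.
-/

open MeasureTheory Filter
open scoped Real

open Set Real

lemma stdNormalCDF_eq_integral_Ioi (z : ℝ) :
    stdNormalCDF z = ∫ t in Ioi (-z), exp (-t ^ 2 / 2) / √(2 * π) := by
  rw [stdNormalCDF, ← integral_comp_neg_Iic]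
  simp only [neg_sq]

section Gaussian

variable {c : ℝ}

lemma integrable_exp_neg_mul_sq_div_two (hc : c ≠ 0) :
    Integrable fun t : ℝ => exp (-(c * t) ^ 2 / 2) := by
  convert integrable_exp_neg_mul_sq (b := c ^ 2 / 2) (by positivity) using 3
  ring

lemma integrable_mul_exp_neg_mul_sq_div_two (hc : c ≠ 0) :
    Integrable fun t : ℝ => t * exp (-(c * t) ^ 2 / 2) := by
  convert integrable_mul_exp_neg_mul_sq (b := c ^ 2 / 2) (by positivity) using 4
  ring

lemma integral_Ioi_exp_neg_mul_sq_div_two (hc : 0 < c) (w : ℝ) :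
    ∫ t in Ioi w, exp (-(c * t) ^ 2 / 2) = √(2 * π) / c * stdNormalCDF (-(c * w)) := by
  rw [integral_comp_mul_left_Ioi (fun s => exp (-s ^ 2 / 2)) w hc, stdNormalCDF_eq_integral_Ioi,
    neg_neg, integral_div, smul_eq_mul]
  field_simp

lemma hasDerivAt_neg_exp_neg_mul_sq_div_two_div_sq (hc : c ≠ 0) (t : ℝ) :
    HasDerivAt (fun t => -(exp (-(c * t) ^ 2 / 2) / c ^ 2)) (t * exp (-(c * t) ^ 2 / 2)) t := by
  have h : HasDerivAt (fun t => -(c * t) ^ 2 / 2) (-(c ^ 2 * t)) t :=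
    (((hasDerivAt_pow 2 t).const_mul (-c ^ 2 / 2)).congr_deriv (by ring)).congr_of_eventuallyEq
      (.of_forall fun s => by ring)
  exact (h.exp.div_const (c ^ 2)).neg.congr_deriv (by field_simp)

lemma integral_Ioi_mul_exp_neg_mul_sq_div_two (hc : c ≠ 0) (w : ℝ) :
    ∫ t in Ioi w, t * exp (-(c * t) ^ 2 / 2) = exp (-(c * w) ^ 2 / 2) / c ^ 2 := by
  have hlim : Tendsto (fun t => -(exp (-(c * t) ^ 2 / 2) / c ^ 2)) atTop (nhds 0) := by
    have h : Tendsto (fun t => -(c * t) ^ 2 / 2) atTop atBot := by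
      have hc2 : -c ^ 2 / 2 < 0 := by linarith [show 0 < c ^ 2 by positivity]
      convert (tendsto_pow_atTop two_ne_zero).const_mul_atTop_of_neg hc2 using 2
      ring
    simpa using ((tendsto_exp_atBot.comp h).div_const (c ^ 2)).neg
  rw [integral_Ioi_of_hasDerivAt_of_tendsto
    (hasDerivAt_neg_exp_neg_mul_sq_div_two_div_sq hc w).continuousAt.continuousWithinAt
    (fun t _ => hasDerivAt_neg_exp_neg_mul_sq_div_two_div_sq hc t)
    (integrable_mul_exp_neg_mul_sq_div_two hc).integrableOn hlim]
  ring

lemma integral_Ioi_add_mul_exp_neg_mul_sq_div_two (hc : 0 < c) (x : ℝ) :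
    ∫ t in Ioi (-x), (t + x) * exp (-(c * t) ^ 2 / 2) =
      exp (-(c * x) ^ 2 / 2) / c ^ 2 + x * (√(2 * π) / c * stdNormalCDF (c * x)) := by
  simp only [add_mul]
  rw [integral_add (integrable_mul_exp_neg_mul_sq_div_two hc.ne').integrableOn
      ((integrable_exp_neg_mul_sq_div_two hc.ne').const_mul x).integrableOn,
    integral_const_mul, integral_Ioi_mul_exp_neg_mul_sq_div_two hc.ne',
    integral_Ioi_exp_neg_mul_sq_div_two hc, mul_neg, neg_sq, neg_neg]

lemma integral_Iic_add_mul_exp_neg_mul_sq_div_two (hc : 0 < c) (x : ℝ) :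
    ∫ t in Iic (-x), (t + x) * exp (-(c * t) ^ 2 / 2) =
      -(exp (-(c * x) ^ 2 / 2) / c ^ 2) + x * (√(2 * π) / c * stdNormalCDF (-(c * x))) := by
  have h := integral_Ioi_add_mul_exp_neg_mul_sq_div_two hc (-x)
  rw [neg_neg, mul_neg, neg_sq] at h
  rw [← integral_comp_neg_Ioi]
  simp only [mul_neg, neg_sq, show ∀ t, -t + x = -(t + -x) from fun t => by ring, neg_mul,
    integral_neg, h]
  ring

lemma integral_max_mul_mul_exp_neg_mul_sub_sq_div_two {γ : ℝ} (hγ : γ ≤ 1) (hc : 0 < c)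
    (x : ℝ) :
    ∫ u, max (γ * u) u * exp (-(c * (u - x)) ^ 2 / 2) =
      (1 - γ) * (exp (-(c * x) ^ 2 / 2) / c ^ 2) +
        x * (√(2 * π) / c) * (stdNormalCDF (c * x) + γ * stdNormalCDF (-(c * x))) := by
  set E : ℝ → ℝ := fun t => exp (-(c * t) ^ 2 / 2)
  have hint : Integrable fun t => (t + x) * E t :=
    ((integrable_mul_exp_neg_mul_sq_div_two hc.ne').add
      ((integrable_exp_neg_mul_sq_div_two hc.ne').const_mul x)).congr
      (.of_forall fun t => by simp only [Pi.add_apply, E]; ring)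
  have hIic : EqOn (fun t => γ * ((t + x) * E t)) (fun t => max (γ * (t + x)) (t + x) * E t)
      (Iic (-x)) := fun t (ht : t ≤ -x) => by
    simp only [max_eq_left (by nlinarith : γ * (t + x) ≥ t + x), mul_assoc]
  have hIoi : EqOn (fun t => (t + x) * E t) (fun t => max (γ * (t + x)) (t + x) * E t)
      (Ioi (-x)) := fun t (ht : -x < t) => by
    simp only [max_eq_right (by nlinarith : γ * (t + x) ≤ t + x)]
  rw [← integral_add_right_eq_self _ x]
  simp only [add_sub_cancel_right]
  rw [← intervalIntegral.integral_Iic_add_Ioi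
      ((hint.const_mul γ).integrableOn.congr_fun hIic measurableSet_Iic)
      (hint.integrableOn.congr_fun hIoi measurableSet_Ioi),
    ← setIntegral_congr_fun measurableSet_Iic hIic, ← setIntegral_congr_fun measurableSet_Ioi hIoi,
    integral_const_mul, integral_Iic_add_mul_exp_neg_mul_sq_div_two hc,
    integral_Ioi_add_mul_exp_neg_mul_sq_div_two hc]
  ring

end Gaussian

/-- closed form of the Gaussian-smoothed leaky ReLU in terms of the normal CDF. -/
theorem stmt14 (γ β : ℝ) (hγ : γ ∈ Set.Ioo (0 : ℝ) 1) (hβ : 0 < β) (x : ℝ) :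
    -(1 - γ) ^ 2 / (2 * Real.pi * β) +
        ((1 - γ) ^ 2 / (2 * Real.pi * β)) * Real.exp (-(Real.pi * β ^ 2 * x ^ 2) / (1 - γ) ^ 2) +
        x * stdNormalCDF (β * Real.sqrt (2 * Real.pi) * x / (1 - γ)) +
        γ * x * stdNormalCDF (-(β * Real.sqrt (2 * Real.pi) * x / (1 - γ)))
      = slrelu γ β x := by
  have h1γ : 0 < 1 - γ := sub_pos.2 hγ.2
  set c := β * √(2 * π) / (1 - γ)
  have hc : 0 < c := by positivity
  have hsq : √(2 * π) ^ 2 = 2 * π := Real.sq_sqrt (by positivity)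
  have hc2 : c ^ 2 = 2 * π * β ^ 2 / (1 - γ) ^ 2 := by
    rw [div_pow, mul_pow, hsq]; ring
  have hsqrt : √(2 * π) / c = (1 - γ) / β := by
    simp only [c]; field_simp
  have hexp : ∀ u, -(π * β ^ 2 * (x - u) ^ 2) / (1 - γ) ^ 2 = -(c * (u - x)) ^ 2 / 2 := by
    intro u; rw [mul_pow, hc2]; ring
  have hz : β * √(2 * π) * x / (1 - γ) = c * x := by ring
  have hexp0 := hexp 0
  rw [sub_zero, zero_sub, mul_neg, neg_sq] at hexp0
  simp_rw [slrelu, hexp, hexp0, hz]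
  rw [integral_max_mul_mul_exp_neg_mul_sub_sq_div_two hγ.2.le hc, hsqrt, hc2]
  field_simp
  ring
end
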